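/- arXiv:2107.12500 — 5 statements merged into one kernel-verified Lean document; each statement's English description precedes it below -/
import Mathlib

section
/- Let X: Σ → R^3 be an immersed surface with unit normal ν and mean curvature H satisfying H + c_o = −ν₃/z on Σ, where z = X·e₃ ≠ 0 and ν₃ = ν·e₃. Then ΔH + 2(H+c_o)(H(H−c_o) − K) = 0 holds on Σ, i.e. the surface is critical for the Helfrich energy ∫(H+c_o)² dΣ under compactly supported variations. One may use the identities Δz = 2Hν₃, Δν₃ = −‖dν‖²ν₃ − 2∇H·∇z, ‖∇z‖² = 1 − ν₃², and ‖dν‖² = 4H² − 2K. -/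
/-- If an immersed surface satisfies H + c_o = −ν₃/z (z ≠ 0), then
ΔH + 2(H+c_o)(H(H−c_o)−K) = 0, i.e. the surface is critical for the Helfrich energy.
Here Δ is the surface Laplacian and D f g = ∇f·∇g, satisfying the usual Leibniz rules,
and the geometric identities Δz = 2Hν₃, Δν₃ = −‖dν‖²ν₃ − 2∇H·∇z, ‖∇z‖² = 1 − ν₃²,
‖dν‖² = 4H² − 2K are assumed. -/
theorem stmt_3 {S : Type*} (Δ : (S → ℝ) → (S → ℝ)) (D : (S → ℝ) → (S → ℝ) → (S → ℝ))
    (H K z ν₃ : S → ℝ) (c_o : ℝ)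
    (hΔadd : ∀ f g : S → ℝ, Δ (f + g) = Δ f + Δ g)
    (hΔsmul : ∀ (c : ℝ) (f : S → ℝ), Δ (c • f) = c • Δ f)
    (hΔleib : ∀ f g : S → ℝ, Δ (f * g) = f * Δ g + (2 : ℝ) • D f g + g * Δ f)
    (hΔconst : Δ 1 = 0)
    (hDsymm : ∀ f g : S → ℝ, D f g = D g f)
    (hDadd : ∀ f g h : S → ℝ, D f (g + h) = D f g + D f h)
    (hDsmul : ∀ (c : ℝ) (f g : S → ℝ), D f (c • g) = c • D f g)
    (hDleib : ∀ f g h : S → ℝ, D f (g * h) = g * D f h + h * D f g)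
    (hDconst : ∀ f : S → ℝ, D f 1 = 0)
    (hz : ∀ p, z p ≠ 0)
    (hΔz : ∀ p, Δ z p = 2 * H p * ν₃ p)
    (hΔν : ∀ p, Δ ν₃ p = -((4 * H p ^ 2 - 2 * K p) * ν₃ p) - 2 * D H z p)
    (hgradz : ∀ p, D z z p = 1 - ν₃ p ^ 2)
    (hrel : ∀ p, H p + c_o = -(ν₃ p / z p)) :
    ∀ p, Δ H p + 2 * (H p + c_o) * (H p * (H p - c_o) - K p) = 0 := by
  have hν : ∀ q, ν₃ q = -((H q + c_o) * z q) := by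
    intro q
    have h := hrel q
    have hzq := hz q
    field_simp at h
    linarith
  have hfun : ν₃ = (-1 : ℝ) • ((H + c_o • (1 : S → ℝ)) * z) := by
    funext q
    simp only [Pi.smul_apply, Pi.add_apply, Pi.mul_apply, Pi.one_apply, smul_eq_mul, hν q]
    ring
  -- Δ of the RHS
  have hΔH' : Δ (H + c_o • (1 : S → ℝ)) = Δ H := by
    rw [hΔadd, hΔsmul, hΔconst, smul_zero, add_zero]
  have hD' : D (H + c_o • (1 : S → ℝ)) z = D H z := by
    rw [hDsymm, hDadd, hDsmul, hDconst, smul_zero, add_zero, hDsymm]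
  have hexp : Δ ν₃ = (-1 : ℝ) • ((H + c_o • (1 : S → ℝ)) * Δ z
      + (2 : ℝ) • D H z + z * Δ H) := by
    rw [hfun, hΔsmul, hΔleib, hΔH', hD']
  intro p
  have he := congrFun hexp p
  have hν' := hν p
  have hΔνp := hΔν p
  have hΔzp := hΔz p
  simp only [Pi.smul_apply, Pi.add_apply, Pi.mul_apply, Pi.one_apply, smul_eq_mul] at he
  rw [hΔνp, hΔzp] at he
  have hkey : z p * (Δ H p + 2 * (H p + c_o) * (H p * (H p - c_o) - K p)) = 0 := by
    rw [hν'] at he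
    nlinarith [he]
  rcases mul_eq_zero.mp hkey with h | h
  · exact absurd h (hz p)
  · exact h
end

section
/- Let X: Σ → R^3 be an immersion critical for the Helfrich energy with spontaneous curvature c_o, i.e. L[H+c_o] = 0 and L[(H+c_o)X²/2 + q] = 2c_o hold, where L[f] = Δf + 2(H(H−c_o)−K)f and q = X·ν. If (H+c_o)(X²+1)/2 + q ≡ 0 on Σ, then c_o = 0. -/
/-- If an immersion is critical for the Helfrich energy, so that
L[H+c_o] = 0 and L[(H+c_o)X²/2 + q] = 2c_o hold for the linear operator
L[f] = Δf + 2(H(H−c_o)−K)f, and if (H+c_o)(X²+1)/2 + q ≡ 0 on Σ, then c_o = 0. -/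
theorem stmt_6 {S : Type*} [Nonempty S] (Δ : (S → ℝ) →ₗ[ℝ] (S → ℝ))
    (H K q X2 : S → ℝ) (c_o : ℝ)
    (h1 : ∀ p, Δ (fun r => H r + c_o) p
        + 2 * (H p * (H p - c_o) - K p) * (H p + c_o) = 0)
    (h2 : ∀ p, Δ (fun r => (H r + c_o) * X2 r / 2 + q r) p
        + 2 * (H p * (H p - c_o) - K p) * ((H p + c_o) * X2 p / 2 + q p) = 2 * c_o)
    (h3 : ∀ p, (H p + c_o) * (X2 p + 1) / 2 + q p = 0) :
    c_o = 0 := by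
  obtain ⟨p⟩ := ‹Nonempty S›
  have hfun : (fun r => (H r + c_o) * X2 r / 2 + q r)
      = (-(1/2) : ℝ) • (fun r => H r + c_o) := by
    funext r
    have := h3 r
    simp only [Pi.smul_apply, smul_eq_mul]
    linarith
  have hΔ : Δ (fun r => (H r + c_o) * X2 r / 2 + q r) p
      = -(1/2) * Δ (fun r => H r + c_o) p := by
    rw [hfun, map_smul]; simp
  have hq : (H p + c_o) * X2 p / 2 + q p = -(1/2) * (H p + c_o) := by
    have := h3 p; linarith
  have := h2 p
  rw [hΔ, hq] at this
  have h1p := h1 p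
  nlinarith [this, h1p]
end

section
/- With the boundary condition (a+b) sin φ(L) + 2a c_o r(L) = 0 along a non-geodesic boundary circle of radius r(L) = √(α/β) of an axially symmetric critical disc, the energy parameters must satisfy c_o² < (a+b)²β/(4a²α). Consequently (nonexistence): if c_o ≠ 0 and a = −b > 0, there is no axially symmetric disc critical for E satisfying a(H+c_o)² + bK ≡ 0 along its boundary. -/
/-!
Squaring the boundary condition gives `(2 a c_o r)² = (a + b)² sin² φ(L)`, and off a geodesic
`sin² φ(L) < 1`; since `2 a c_o r ≠ 0` this forces `(2 a c_o r)² < (a + b)²`, and substituting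
`r² = α / β` yields the bound. When `a = -b` the boundary condition degenerates to
`2 a c_o r = 0`, which is impossible.
-/

lemma sq_lt_sq_of_mul_add_eq_zero {x y s : ℝ} (hs : |s| < 1) (hy : y ≠ 0)
    (h : x * s + y = 0) : y ^ 2 < x ^ 2 := by
  have hy' : |y| = |x| * |s| := by
    rw [← abs_mul, ← abs_neg, show -y = x * s by linarith]
  have hx : 0 < |x| := abs_pos.mpr fun hx => hy (by simpa [hx] using h)
  rw [sq_lt_sq, hy']
  exact mul_lt_of_lt_one_right hx hs

lemma div_eq_inv_sq_of_eq_sqrt_div {α β r : ℝ} (hr : 0 < r) (hrr : r = Real.sqrt (α / β)) :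
    β / α = (r ^ 2)⁻¹ := by
  have hαβ : 0 < α / β := Real.sqrt_pos.mp (hrr ▸ hr)
  have hr2 : r ^ 2 = α / β := by rw [hrr, Real.sq_sqrt hαβ.le]
  rw [hr2, inv_div]

theorem stmt_9_general (a b c_o α β r φL : ℝ)
    (ha : 0 < a) (hr : 0 < r) (hc : c_o ≠ 0)
    (hbc : (a + b) * Real.sin φL + 2 * a * c_o * r = 0) :
    (|Real.sin φL| < 1 → r = Real.sqrt (α / β) →
        c_o ^ 2 < (a + b) ^ 2 * β / (4 * a ^ 2 * α)) ∧
      (a = -b → False) := by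
  have hy : 2 * a * c_o * r ≠ 0 := by positivity
  refine ⟨fun hs hrr => ?_, fun hab => hy (by simpa [hab] using hbc)⟩
  have hlt := sq_lt_sq_of_mul_add_eq_zero hs hy hbc
  rw [mul_div_mul_comm, div_eq_inv_sq_of_eq_sqrt_div hr hrr, ← div_eq_mul_inv, div_div,
    lt_div_iff₀ (by positivity)]
  linarith

/-- With the boundary condition (a+b)sin φ(L) + 2a c_o r(L) = 0 along a
non-geodesic (|sin φ(L)| < 1) boundary circle of radius r(L) = √(α/β), the parameters
must satisfy c_o² < (a+b)²β/(4a²α). Consequently, if c_o ≠ 0 and a = −b > 0, there is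
no axially symmetric critical disc satisfying a(H+c_o)² + bK ≡ 0 along the boundary
(i.e. satisfying this boundary condition). -/
theorem stmt_9 (a b c_o α β r φL : ℝ)
    (ha : 0 < a) (hα : 0 < α) (hβ : 0 < β) (hr : 0 < r) (hc : c_o ≠ 0)
    (hbc : (a + b) * Real.sin φL + 2 * a * c_o * r = 0) :
    (|Real.sin φL| < 1 → r = Real.sqrt (α / β) →
        c_o ^ 2 < (a + b) ^ 2 * β / (4 * a ^ 2 * α)) ∧
      (a = -b → False) :=
  stmt_9_general a b c_o α β r φL ha hr hc hbc
end

section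
/- Let f(ε) be the energy of the truncated axially symmetric critical surface, with second derivative at ε = 0 given by f''(0) = 4πr(βκ_g² − 2bc_o²κ_g) when the boundary circle has radius r = √(α/β). Using the boundary relation |r'(L)| = √(1 − 4a²c_o²α/((a+b)²β)) and κ_g = −r'/r, show: if α > β³(a+b)²/(4c_o²(b²(a+b)²c_o² + a²β²)) and bκ_g > 0 along the boundary, then f''(0) < 0 (instability). -/
/-!
The boundary data give `κ_g² = β/α - 4a²c_o²/(a+b)²`. Since `bκ_g > 0`, the quadratic
`βκ_g² - 2bc_o²κ_g = κ_g(βκ_g - 2bc_o²)` is negative as soon as `|βκ_g| < 2|b|c_o²`, and after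
clearing denominators `β²κ_g² < 4b²c_o⁴` is exactly the lower bound on `α`.
-/

theorem mul_sq_sub_mul_lt_zero_of_sq_lt {β b m κ : ℝ} (hbκ : 0 < b * κ) (hm : 0 ≤ m)
    (h : (β * κ) ^ 2 < (2 * b * m) ^ 2) : β * κ ^ 2 - 2 * b * m * κ < 0 := by
  have hb2 : 0 < b ^ 2 := by nlinarith [sq_nonneg b, sq_nonneg κ]
  have hlt : β * (b * κ) < 2 * b ^ 2 * m :=
    lt_of_abs_lt (abs_lt_of_sq_lt_sq (by nlinarith) (by positivity))
  have : b ^ 2 * (β * κ ^ 2 - 2 * b * m * κ) < 0 := by nlinarith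
  exact neg_of_mul_neg_right this hb2.le

theorem sq_mul_lt_of_lt_threshold {a b c α β : ℝ} (ha : a ≠ 0) (hab : a + b ≠ 0) (hc : c ≠ 0)
    (hα : 0 < α) (hβ : β ≠ 0)
    (h : α > β ^ 3 * (a + b) ^ 2 / (4 * c ^ 2 * (b ^ 2 * (a + b) ^ 2 * c ^ 2 + a ^ 2 * β ^ 2))) :
    β ^ 2 * (β / α - 4 * a ^ 2 * c ^ 2 / (a + b) ^ 2) < (2 * b * c ^ 2) ^ 2 := by
  have hden : 0 < 4 * c ^ 2 * (b ^ 2 * (a + b) ^ 2 * c ^ 2 + a ^ 2 * β ^ 2) := by positivity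
  rw [gt_iff_lt, div_lt_iff₀ hden] at h
  have hgap : (2 * b * c ^ 2) ^ 2 - β ^ 2 * (β / α - 4 * a ^ 2 * c ^ 2 / (a + b) ^ 2) =
      (α * (4 * c ^ 2 * (b ^ 2 * (a + b) ^ 2 * c ^ 2 + a ^ 2 * β ^ 2)) - β ^ 3 * (a + b) ^ 2) /
        (α * (a + b) ^ 2) := by
    field_simp
    ring
  rw [← sub_pos, hgap]
  exact div_pos (by linarith) (by positivity)

/-- With boundary radius r = √(α/β), |r'(L)| = √(1 − 4a²c_o²α/((a+b)²β))
and κ_g = −r'/r, if α > β³(a+b)²/(4c_o²(b²(a+b)²c_o² + a²β²)) and bκ_g > 0 along the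
boundary, then f''(0) has the sign of βκ_g² − 2bc_o²κ_g < 0, i.e. the surface is
unstable. -/
theorem stmt_10 (a b c_o α β r r' κg : ℝ)
    (ha : 0 < a) (hα : 0 < α) (hβ : 0 < β) (hc : c_o ≠ 0)
    (hle : 4 * a ^ 2 * c_o ^ 2 * α ≤ (a + b) ^ 2 * β)
    (hr : r = Real.sqrt (α / β))
    (hr' : |r'| = Real.sqrt (1 - 4 * a ^ 2 * c_o ^ 2 * α / ((a + b) ^ 2 * β)))
    (hκ : κg = -r' / r)
    (hαbig : α > β ^ 3 * (a + b) ^ 2 /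
        (4 * c_o ^ 2 * (b ^ 2 * (a + b) ^ 2 * c_o ^ 2 + a ^ 2 * β ^ 2)))
    (hbκ : b * κg > 0) :
    β * κg ^ 2 - 2 * b * c_o ^ 2 * κg < 0 := by
  have hab : a + b ≠ 0 := by
    intro h
    have : 0 < 4 * a ^ 2 * c_o ^ 2 * α := by positivity
    rw [h] at hle
    norm_num at hle
    linarith
  have hT : 0 ≤ 1 - 4 * a ^ 2 * c_o ^ 2 * α / ((a + b) ^ 2 * β) :=
    sub_nonneg.2 ((div_le_one (by positivity)).2 hle)
  have hκ2 : κg ^ 2 = β / α - 4 * a ^ 2 * c_o ^ 2 / (a + b) ^ 2 := by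
    rw [hκ, hr, div_pow, neg_sq, ← sq_abs, hr', Real.sq_sqrt hT, Real.sq_sqrt (by positivity)]
    field_simp
  refine mul_sq_sub_mul_lt_zero_of_sq_lt hbκ (sq_nonneg c_o) ?_
  rw [mul_pow, hκ2]
  exact sq_mul_lt_of_lt_threshold ha.ne' hab hc hα hβ.ne' hαbig
end

section
/- Let a > 0, b real with −3a ≤ b ≤ a, and c_o, α, β > 0 satisfy c_o² ≤ β/α (which follows from (a+b)² ≤ 4a² together with c_o² < (a+b)²β/(4a²α)). Suppose an axially symmetric critical disc has ∫_Σ(H+c_o)² dΣ > 0, total Gaussian curvature ∫_Σ K dΣ = 2π − 2πr'(L), and boundary a circle of radius √(α/β), with |r'(L)| ≤ √(1 − c_o²α/β). Then its energy satisfies E[Σ] > 2πb − 2π|b|√(1 − c_o²α/β) + 4π√(αβ), the right-hand side being the energy of a spherical cap of mean curvature −c_o bounded by a circle of radius √(α/β); hence the surface is not a minimizer. -/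
/-- Let a > 0, −3a ≤ b ≤ a, c_o, α, β > 0 with c_o² ≤ β/α. For an axially
symmetric critical disc with ∫(H+c_o)²dΣ > 0, total Gaussian curvature 2π − 2πr'(L),
boundary circle of radius √(α/β) (boundary energy 4π√(αβ)), and
|r'(L)| ≤ √(1 − c_o²α/β), the energy exceeds that of a spherical cap:
E[Σ] > 2πb − 2π|b|√(1 − c_o²α/β) + 4π√(αβ); hence the surface is not a minimizer. -/
theorem stmt_15 (a b c_o α β If r' : ℝ)
    (ha : 0 < a) (hb1 : -3 * a ≤ b) (hb2 : b ≤ a)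
    (hc : 0 < c_o) (hα : 0 < α) (hβ : 0 < β)
    (hco : c_o ^ 2 ≤ β / α) (hIf : 0 < If)
    (hr' : |r'| ≤ Real.sqrt (1 - c_o ^ 2 * α / β)) :
    2 * Real.pi * b - 2 * Real.pi * |b| * Real.sqrt (1 - c_o ^ 2 * α / β)
        + 4 * Real.pi * Real.sqrt (α * β)
      < a * If + b * (2 * Real.pi - 2 * Real.pi * r')
        + 4 * Real.pi * Real.sqrt (α * β) := by
  have h1 : b * r' ≤ |b| * Real.sqrt (1 - c_o ^ 2 * α / β) := by
    calc b * r' ≤ |b * r'| := le_abs_self _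
    _ = |b| * |r'| := abs_mul _ _
    _ ≤ |b| * Real.sqrt (1 - c_o ^ 2 * α / β) :=
        mul_le_mul_of_nonneg_left hr' (abs_nonneg b)
  nlinarith [Real.pi_pos, mul_pos ha hIf, mul_le_mul_of_nonneg_left h1 Real.two_pi_pos.le]
end
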